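/- Let X be the tridiagonal LogDet preconditioner with P_G(X⁻¹) = H where H has unit diagonal (H_{ii}=1) and off-diagonals Ĥ_{i,i+1} with |Ĥ_{i,i+1}| ≤ β < 1. Then the maximum absolute row sum of X satisfies ‖X‖_∞ ≤ 2 max_{i∈[n-1]} 1/(1 - |Ĥ_{i,i+1}|), using the explicit entries X_{ii} = 1 + Σ_{j: |i-j|=1} Ĥ_{ij}²/(1-Ĥ_{ij}²) and X_{i,i+1} = -Ĥ_{i,i+1}/(1-Ĥ_{i,i+1}²). -/
import Mathlib


open Matrix

private lemma aux_pos {h : ℝ} (hh : |h| < 1) : 0 < 1 - h ^ 2 := by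
  nlinarith [sq_abs h, abs_nonneg h]

private lemma aux_key {h : ℝ} (hh : |h| < 1) :
    h ^ 2 / (1 - h ^ 2) + |(-h) / (1 - h ^ 2)| = 1 / (1 - |h|) - 1 := by
  have h1 := aux_pos hh
  have h2 : 0 < 1 - |h| := by linarith
  have h3 : 0 < 1 + |h| := by have := abs_nonneg h; linarith
  rw [abs_div, abs_neg, abs_of_pos h1, ← sq_abs h]
  have h4 : 1 - |h| ^ 2 = (1 - |h|) * (1 + |h|) := by ring
  rw [h4]
  field_simp
  ring_nf

private lemma aux_one_le {h : ℝ} (hh : |h| < 1) : 1 ≤ 1 / (1 - |h|) := by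
  have h2 : 0 < 1 - |h| := by linarith
  rw [le_div_iff₀ (by linarith)]
  nlinarith [abs_nonneg h]

private lemma row_bound_edge (a M : ℝ) (ha : |a| < 1) (hMa : 1 / (1 - |a|) ≤ M)
    (hM1 : 1 ≤ M) :
    |1 + a ^ 2 / (1 - a ^ 2)| + |(-a) / (1 - a ^ 2)| ≤ 2 * M := by
  have h1 := aux_pos ha
  have hnn : 0 ≤ 1 + a ^ 2 / (1 - a ^ 2) := by positivity
  rw [abs_of_nonneg hnn]
  have hk := aux_key ha
  linarith

private lemma row_bound_mid (a b M : ℝ) (ha : |a| < 1) (hb : |b| < 1)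
    (hMa : 1 / (1 - |a|) ≤ M) (hMb : 1 / (1 - |b|) ≤ M) :
    |1 + a ^ 2 / (1 - a ^ 2) + b ^ 2 / (1 - b ^ 2)| + |(-a) / (1 - a ^ 2)|
      + |(-b) / (1 - b ^ 2)| ≤ 2 * M := by
  have h1 := aux_pos ha
  have h2 := aux_pos hb
  have hnn : 0 ≤ 1 + a ^ 2 / (1 - a ^ 2) + b ^ 2 / (1 - b ^ 2) := by positivity
  rw [abs_of_nonneg hnn]
  have hka := aux_key ha
  have hkb := aux_key hb
  have h1a := aux_one_le ha
  linarith

theorem tridiag_explicit_solution_row_sum_bound {n : ℕ} (hn : 1 < n)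
    (H X : Matrix (Fin n) (Fin n) ℝ)
    (hHsym : H.IsSymm) (hHdiag : ∀ i, H i i = 1)
    (hβ : ∀ (i : Fin n) (h : (i : ℕ) + 1 < n), |H ⟨(i : ℕ) + 1, h⟩ i| < 1)
    (hXdiag : ∀ i : Fin n, X i i = 1 +
      (if h : (i : ℕ) + 1 < n then
        (H ⟨(i : ℕ) + 1, h⟩ i) ^ 2 / (1 - (H ⟨(i : ℕ) + 1, h⟩ i) ^ 2) else 0) +
      (if 0 < (i : ℕ) then
        (H i ⟨(i : ℕ) - 1, by have := i.isLt; omega⟩) ^ 2 /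
          (1 - (H i ⟨(i : ℕ) - 1, by have := i.isLt; omega⟩) ^ 2) else 0))
    (hXoff : ∀ (i : Fin n) (h : (i : ℕ) + 1 < n),
      X i ⟨(i : ℕ) + 1, h⟩ = -(H ⟨(i : ℕ) + 1, h⟩ i) / (1 - (H ⟨(i : ℕ) + 1, h⟩ i) ^ 2) ∧
      X ⟨(i : ℕ) + 1, h⟩ i = -(H ⟨(i : ℕ) + 1, h⟩ i) / (1 - (H ⟨(i : ℕ) + 1, h⟩ i) ^ 2))
    (hXsp : ∀ i j : Fin n, ((i : ℕ) + 1 < (j : ℕ) ∨ (j : ℕ) + 1 < (i : ℕ)) → X i j = 0) :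
    ∀ i : Fin n, ∑ j, |X i j| ≤
      2 * Finset.univ.sup' (Finset.univ_nonempty_iff.mpr ⟨⟨0, by omega⟩⟩)
        (fun k : Fin (n - 1) =>
          1 / (1 - |H ⟨k.1 + 1, by have := k.isLt; omega⟩ ⟨k.1, by have := k.isLt; omega⟩|)) := by
  intro i
  set M := Finset.univ.sup' (Finset.univ_nonempty_iff.mpr ⟨⟨0, by omega⟩⟩)
      (fun k : Fin (n - 1) =>
        1 / (1 - |H ⟨k.1 + 1, by have := k.isLt; omega⟩ ⟨k.1, by have := k.isLt; omega⟩|))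
    with hMdef
  have hMge : ∀ (k : ℕ) (hk : k + 1 < n), 1 / (1 - |H ⟨k + 1, hk⟩ ⟨k, by omega⟩|) ≤ M := by
    intro k hk
    exact Finset.le_sup'
      (fun k : Fin (n - 1) =>
        1 / (1 - |H ⟨k.1 + 1, by have := k.isLt; omega⟩ ⟨k.1, by have := k.isLt; omega⟩|))
      (Finset.mem_univ (⟨k, by omega⟩ : Fin (n - 1)))
  have h01 : (0 : ℕ) + 1 < n := by omega
  have hb0 : |H ⟨0 + 1, h01⟩ ⟨0, by omega⟩| < 1 := hβ ⟨0, by omega⟩ h01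
  have hM1 : 1 ≤ M := le_trans (aux_one_le hb0) (hMge 0 h01)
  obtain ⟨iv, hiv⟩ := i
  rcases eq_or_ne iv 0 with h0 | h0
  · -- first row
    subst h0
    have h1 : (0 : ℕ) + 1 < n := h01
    have ha : |H ⟨0 + 1, h1⟩ ⟨0, hiv⟩| < 1 := hβ ⟨0, hiv⟩ h1
    have hd : X ⟨0, hiv⟩ ⟨0, hiv⟩ =
        1 + (H ⟨0 + 1, h1⟩ ⟨0, hiv⟩) ^ 2 / (1 - (H ⟨0 + 1, h1⟩ ⟨0, hiv⟩) ^ 2) := by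
      rw [hXdiag ⟨0, hiv⟩, dif_pos h1, if_neg (by simp only [Fin.val_mk]; omega)]
      simp only [Fin.val_mk]
      ring
    have ho : X ⟨0, hiv⟩ ⟨0 + 1, h1⟩ =
        -(H ⟨0 + 1, h1⟩ ⟨0, hiv⟩) / (1 - (H ⟨0 + 1, h1⟩ ⟨0, hiv⟩) ^ 2) :=
      (hXoff ⟨0, hiv⟩ h1).1
    have hsum : ∑ j, |X ⟨0, hiv⟩ j| = |X ⟨0, hiv⟩ ⟨0, hiv⟩| + |X ⟨0, hiv⟩ ⟨0 + 1, h1⟩| := by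
      rw [← Finset.sum_subset
        (Finset.subset_univ ({⟨0, hiv⟩, ⟨0 + 1, h1⟩} : Finset (Fin n)))
        (fun x _ hx => by
          simp only [Finset.mem_insert, Finset.mem_singleton, Fin.ext_iff, Fin.val_mk,
            not_or] at hx
          rw [hXsp _ _ (by simp only [Fin.val_mk]; omega), abs_zero])]
      rw [Finset.sum_pair (by simp [Fin.ext_iff])]
    rw [hsum, hd, ho]
    exact row_bound_edge _ M ha (hMge 0 h1) hM1
  · rcases eq_or_ne (iv + 1) n with hlast | hlast
    · -- last row
      have hb' : iv - 1 + 1 < n := by omega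
      have hlt : iv - 1 < n := by omega
      have hfin : (⟨iv - 1 + 1, hb'⟩ : Fin n) = ⟨iv, hiv⟩ := by
        apply Fin.ext; simp only [Fin.val_mk]; omega
      have hbb : |H ⟨iv, hiv⟩ ⟨iv - 1, hlt⟩| < 1 := by
        have h2 : |H ⟨iv - 1 + 1, hb'⟩ ⟨iv - 1, hlt⟩| < 1 := hβ ⟨iv - 1, hlt⟩ hb'
        rwa [hfin] at h2
      have hd : X ⟨iv, hiv⟩ ⟨iv, hiv⟩ =
          1 + (H ⟨iv, hiv⟩ ⟨iv - 1, hlt⟩) ^ 2 / (1 - (H ⟨iv, hiv⟩ ⟨iv - 1, hlt⟩) ^ 2) := by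
        rw [hXdiag ⟨iv, hiv⟩, dif_neg (by simp only [Fin.val_mk]; omega),
          if_pos (by simp only [Fin.val_mk]; omega)]
        simp only [Fin.val_mk]
        try ring
      have ho : X ⟨iv, hiv⟩ ⟨iv - 1, hlt⟩ =
          -(H ⟨iv, hiv⟩ ⟨iv - 1, hlt⟩) / (1 - (H ⟨iv, hiv⟩ ⟨iv - 1, hlt⟩) ^ 2) := by
        have h2 : X ⟨iv - 1 + 1, hb'⟩ ⟨iv - 1, hlt⟩ =
            -(H ⟨iv - 1 + 1, hb'⟩ ⟨iv - 1, hlt⟩) /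
              (1 - (H ⟨iv - 1 + 1, hb'⟩ ⟨iv - 1, hlt⟩) ^ 2) :=
          (hXoff ⟨iv - 1, hlt⟩ hb').2
        rwa [hfin] at h2
      have hsum : ∑ j, |X ⟨iv, hiv⟩ j| =
          |X ⟨iv, hiv⟩ ⟨iv, hiv⟩| + |X ⟨iv, hiv⟩ ⟨iv - 1, hlt⟩| := by
        rw [← Finset.sum_subset
          (Finset.subset_univ ({⟨iv, hiv⟩, ⟨iv - 1, hlt⟩} : Finset (Fin n)))
          (fun x _ hx => by
            simp only [Finset.mem_insert, Finset.mem_singleton, Fin.ext_iff, Fin.val_mk,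
              not_or] at hx
            rw [hXsp _ _ (by simp only [Fin.val_mk]; omega), abs_zero])]
        rw [Finset.sum_pair (by simp [Fin.ext_iff]; omega)]
      rw [hsum, hd, ho]
      have hMb : 1 / (1 - |H ⟨iv, hiv⟩ ⟨iv - 1, hlt⟩|) ≤ M := by
        have h2 : 1 / (1 - |H ⟨iv - 1 + 1, hb'⟩ ⟨iv - 1, hlt⟩|) ≤ M := hMge (iv - 1) hb'
        rwa [hfin] at h2
      exact row_bound_edge _ M hbb hMb hM1
    · -- middle row
      have h1 : iv + 1 < n := by omega
      have hb' : iv - 1 + 1 < n := by omega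
      have hlt : iv - 1 < n := by omega
      have hfin : (⟨iv - 1 + 1, hb'⟩ : Fin n) = ⟨iv, hiv⟩ := by
        apply Fin.ext; simp only [Fin.val_mk]; omega
      have ha : |H ⟨iv + 1, h1⟩ ⟨iv, hiv⟩| < 1 := hβ ⟨iv, hiv⟩ h1
      have hbb : |H ⟨iv, hiv⟩ ⟨iv - 1, hlt⟩| < 1 := by
        have h2 : |H ⟨iv - 1 + 1, hb'⟩ ⟨iv - 1, hlt⟩| < 1 := hβ ⟨iv - 1, hlt⟩ hb'
        rwa [hfin] at h2
      have hd : X ⟨iv, hiv⟩ ⟨iv, hiv⟩ =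
          1 + (H ⟨iv + 1, h1⟩ ⟨iv, hiv⟩) ^ 2 / (1 - (H ⟨iv + 1, h1⟩ ⟨iv, hiv⟩) ^ 2)
            + (H ⟨iv, hiv⟩ ⟨iv - 1, hlt⟩) ^ 2 / (1 - (H ⟨iv, hiv⟩ ⟨iv - 1, hlt⟩) ^ 2) := by
        rw [hXdiag ⟨iv, hiv⟩, dif_pos h1, if_pos (by simp only [Fin.val_mk]; omega)]
      have hoa : X ⟨iv, hiv⟩ ⟨iv + 1, h1⟩ =
          -(H ⟨iv + 1, h1⟩ ⟨iv, hiv⟩) / (1 - (H ⟨iv + 1, h1⟩ ⟨iv, hiv⟩) ^ 2) :=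
        (hXoff ⟨iv, hiv⟩ h1).1
      have hob : X ⟨iv, hiv⟩ ⟨iv - 1, hlt⟩ =
          -(H ⟨iv, hiv⟩ ⟨iv - 1, hlt⟩) / (1 - (H ⟨iv, hiv⟩ ⟨iv - 1, hlt⟩) ^ 2) := by
        have h2 : X ⟨iv - 1 + 1, hb'⟩ ⟨iv - 1, hlt⟩ =
            -(H ⟨iv - 1 + 1, hb'⟩ ⟨iv - 1, hlt⟩) /
              (1 - (H ⟨iv - 1 + 1, hb'⟩ ⟨iv - 1, hlt⟩) ^ 2) :=
          (hXoff ⟨iv - 1, hlt⟩ hb').2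
        rwa [hfin] at h2
      have hsum : ∑ j, |X ⟨iv, hiv⟩ j| =
          |X ⟨iv, hiv⟩ ⟨iv, hiv⟩| + |X ⟨iv, hiv⟩ ⟨iv + 1, h1⟩|
            + |X ⟨iv, hiv⟩ ⟨iv - 1, hlt⟩| := by
        rw [← Finset.sum_subset
          (Finset.subset_univ
            ({⟨iv, hiv⟩, ⟨iv + 1, h1⟩, ⟨iv - 1, hlt⟩} : Finset (Fin n)))
          (fun x _ hx => by
            simp only [Finset.mem_insert, Finset.mem_singleton, Fin.ext_iff, Fin.val_mk,
              not_or] at hx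
            rw [hXsp _ _ (by simp only [Fin.val_mk]; omega), abs_zero])]
        rw [Finset.sum_insert (by simp [Fin.ext_iff]; omega),
          Finset.sum_insert (by simp [Fin.ext_iff]; omega), Finset.sum_singleton]
        ring
      rw [hsum, hd, hoa, hob]
      have hMa : 1 / (1 - |H ⟨iv + 1, h1⟩ ⟨iv, hiv⟩|) ≤ M := hMge iv h1
      have hMb : 1 / (1 - |H ⟨iv, hiv⟩ ⟨iv - 1, hlt⟩|) ≤ M := by
        have h2 : 1 / (1 - |H ⟨iv - 1 + 1, hb'⟩ ⟨iv - 1, hlt⟩|) ≤ M := hMge (iv - 1) hb'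
        rwa [hfin] at h2
      exact row_bound_mid _ _ M ha hbb hMa hMb
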